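/- (Weighted Poincaré inequality with quadratic weight) Let ρ(x) = 1 - x/L on (0, L). For every function φ ∈ H¹_loc(0,L) with φ(0) = 0, ρ·φ ∈ L²(0,L), and ρ²·φ' ∈ L²(0,L), one has ‖ρφ‖_{L²(0,L)} ≤ (2L/3)·‖ρ²φ'‖_{L²(0,L)}. -/

import Mathlib

open Set MeasureTheory

/-!
Write `f = ρ φ` and `g = ρ² φ'`. Since `ρ' = -1/L`, the function `ρ³ φ²` has derivative
`-(3/L) f² + 2 f g`, and it vanishes at both ends (`φ(0) = 0`, `ρ(L) = 0`). Integrating gives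
`‖f‖² = (2L/3) ⟨f, g⟩`, and Cauchy–Schwarz turns this into `‖f‖ ≤ (2L/3) ‖g‖`.
-/

section CauchySchwarz

variable {α : Type*} [MeasurableSpace α] {μ : Measure α} {f g : α → ℝ}

theorem integral_mul_le_sqrt_integral_sq_mul_sqrt_integral_sq (hf : MemLp f 2 μ)
    (hg : MemLp g 2 μ) :
    ∫ x, f x * g x ∂μ ≤ √(∫ x, f x ^ 2 ∂μ) * √(∫ x, g x ^ 2 ∂μ) := by
  have hfg : Integrable (fun x => f x * g x) μ := hf.integrable_mul hg
  have hnorm_sq : ∀ y : ℝ, ‖y‖ ^ (2 : ℝ) = y ^ 2 := fun y => by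
    rw [Real.rpow_two, Real.norm_eq_abs, sq_abs]
  have holder := integral_mul_norm_le_Lp_mul_Lq (f := f) (g := g) Real.HolderConjugate.two_two
    (by rwa [ENNReal.ofReal_ofNat]) (by rwa [ENNReal.ofReal_ofNat])
  simp_rw [hnorm_sq, ← Real.sqrt_eq_rpow] at holder
  calc ∫ x, f x * g x ∂μ ≤ ∫ x, ‖f x‖ * ‖g x‖ ∂μ :=
        integral_mono hfg (by simpa only [norm_mul] using hfg.norm) fun x => by
          simp only [← norm_mul]; exact Real.le_norm_self _
    _ ≤ _ := holder

theorem sqrt_integral_sq_le_of_integral_sq_eq {c : ℝ} (hf : MemLp f 2 μ) (hg : MemLp g 2 μ)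
    (hc : 0 ≤ c) (h : ∫ x, f x ^ 2 ∂μ = c * ∫ x, f x * g x ∂μ) :
    √(∫ x, f x ^ 2 ∂μ) ≤ c * √(∫ x, g x ^ 2 ∂μ) := by
  set A := ∫ x, f x ^ 2 ∂μ
  rcases (Real.sqrt_nonneg A).eq_or_lt with hA | hA
  · rw [← hA]; positivity
  refine le_of_mul_le_mul_right ?_ hA
  calc √A * √A = c * ∫ x, f x * g x ∂μ :=
        (Real.mul_self_sqrt (integral_nonneg fun x => sq_nonneg _)).trans h
    _ ≤ c * (√A * √(∫ x, g x ^ 2 ∂μ)) :=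
        mul_le_mul_of_nonneg_left
          (integral_mul_le_sqrt_integral_sq_mul_sqrt_integral_sq hf hg) hc
    _ = c * √(∫ x, g x ^ 2 ∂μ) * √A := by ring

end CauchySchwarz

theorem aestronglyMeasurable_of_ae_hasDerivAt {F : Type*} [NormedAddCommGroup F]
    [NormedSpace ℝ F] [CompleteSpace F] [MeasurableSpace F] [BorelSpace F]
    [SecondCountableTopology F] {μ : Measure ℝ} {φ φ' : ℝ → F}
    (h : ∀ᵐ x ∂μ, HasDerivAt φ (φ' x) x) : AEStronglyMeasurable φ' μ :=
  (measurable_deriv φ).aestronglyMeasurable.congr (h.mono fun _ hx => hx.deriv)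

theorem integral_Ioo_eq_sub_of_hasDerivAt {E : Type*} [NormedAddCommGroup E] [NormedSpace ℝ E]
    [CompleteSpace E] {a b : ℝ} (hab : a ≤ b) {F G : ℝ → E}
    (hcont : ContinuousOn F (Icc a b))
    (hderiv : ∀ x ∈ Ioo a b, HasDerivAt F (G x) x) (hint : IntegrableOn G (Ioo a b)) :
    ∫ x in Ioo a b, G x = F b - F a := by
  rw [← integral_Ioc_eq_integral_Ioo, ← intervalIntegral.integral_of_le hab]
  exact intervalIntegral.integral_eq_sub_of_hasDerivAt_of_le hab hcont hderiv
    ((intervalIntegrable_iff_integrableOn_Ioo_of_le hab).2 hint)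

theorem integral_sq_eq_mul_integral_mul_of_linear_weight {L : ℝ} (hL : 0 < L)
    {φ φ' : ℝ → ℝ} (hcont : ContinuousOn φ (Icc 0 L))
    (hderiv : ∀ x ∈ Ioo 0 L, HasDerivAt φ (φ' x) x) (h0 : φ 0 = 0)
    (hf : IntegrableOn (fun x => ((1 - x / L) * φ x) ^ 2) (Ioo 0 L))
    (hfg : IntegrableOn (fun x => (1 - x / L) * φ x * ((1 - x / L) ^ 2 * φ' x)) (Ioo 0 L)) :
    ∫ x in Ioo 0 L, ((1 - x / L) * φ x) ^ 2 =
      2 * L / 3 * ∫ x in Ioo 0 L, (1 - x / L) * φ x * ((1 - x / L) ^ 2 * φ' x) := by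
  have hweight : ∀ x, HasDerivAt (fun y : ℝ => 1 - y / L) (-(1 / L)) x := fun x => by
    simpa using ((hasDerivAt_id x).div_const L).const_sub 1
  have hderiv_cube : ∀ x ∈ Ioo 0 L, HasDerivAt (fun x => (1 - x / L) ^ 3 * φ x ^ 2)
      (-(3 / L) * ((1 - x / L) * φ x) ^ 2
        + 2 * ((1 - x / L) * φ x * ((1 - x / L) ^ 2 * φ' x))) x := fun x hx =>
    (((hweight x).pow 3).mul ((hderiv x hx).pow 2)).congr_deriv (by norm_num; ring)
  have hparts := integral_Ioo_eq_sub_of_hasDerivAt hL.le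
    (by fun_prop (disch := exact hcont)) hderiv_cube ((hf.const_mul _).add (hfg.const_mul _))
  rw [integral_add (hf.const_mul _) (hfg.const_mul _), integral_const_mul, integral_const_mul,
    div_self hL.ne', h0] at hparts
  set A := ∫ x in Ioo 0 L, ((1 - x / L) * φ x) ^ 2
  set I := ∫ x in Ioo 0 L, (1 - x / L) * φ x * ((1 - x / L) ^ 2 * φ' x)
  norm_num at hparts
  field_simp at hparts ⊢
  linarith

theorem stmt6 (L : ℝ) (hL : 0 < L) (ρ : ℝ → ℝ) (hρ : ∀ x, ρ x = 1 - x / L)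
    (φ φ' : ℝ → ℝ)
    (hcont : ContinuousOn φ (Icc 0 L))
    (hderiv : ∀ x ∈ Ioo (0:ℝ) L, HasDerivAt φ (φ' x) x)
    (h0 : φ 0 = 0)
    (hφL2 : IntegrableOn (fun x => (ρ x * φ x) ^ 2) (Ioo 0 L))
    (hdL2 : IntegrableOn (fun x => ((ρ x) ^ 2 * φ' x) ^ 2) (Ioo 0 L)) :
    Real.sqrt (∫ x in Ioo (0:ℝ) L, (ρ x * φ x) ^ 2) ≤
      (2 * L / 3) * Real.sqrt (∫ x in Ioo (0:ℝ) L, ((ρ x) ^ 2 * φ' x) ^ 2) := by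
  obtain rfl : ρ = fun x => 1 - x / L := funext hρ
  have hρ_cont : Continuous fun x : ℝ => 1 - x / L := by fun_prop
  have hf : MemLp (fun x => (1 - x / L) * φ x) 2 (volume.restrict (Ioo 0 L)) :=
    (memLp_two_iff_integrable_sq ((hρ_cont.continuousOn.mul
      (hcont.mono Ioo_subset_Icc_self)).aestronglyMeasurable measurableSet_Ioo)).2 hφL2
  have hg : MemLp (fun x => (1 - x / L) ^ 2 * φ' x) 2 (volume.restrict (Ioo 0 L)) :=
    (memLp_two_iff_integrable_sq ((hρ_cont.pow 2).aestronglyMeasurable.mul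
      (aestronglyMeasurable_of_ae_hasDerivAt
        (ae_restrict_of_forall_mem measurableSet_Ioo hderiv)))).2 hdL2
  exact sqrt_integral_sq_le_of_integral_sq_eq hf hg (by positivity)
    (integral_sq_eq_mul_integral_mul_of_linear_weight hL hcont hderiv h0 hφL2
      (hf.integrable_mul hg))
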